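/- arXiv:2008.12023 — 2 statements merged into one kernel-verified Lean document; each statement's English description precedes it below -/
import Mathlib

section
/- Let F be a linear functional on n×n real matrices, and let R₀, R₁ be two distinct maximizers of F over SO(n). Write R₁ = R₀e^W with W skew-symmetric whose nonzero eigenvalues ±iλⱼ satisfy λⱼ ∈ (−π, π]. Then R₀e^{tW} maximizes F over SO(n) for every t ∈ ℝ. -/
open Matrix
noncomputable section

def SO (n : ℕ) : Set (Matrix (Fin n) (Fin n) ℝ) :=
  {R | Rᵀ * R = 1 ∧ R.det = 1}

/-- `μ` is a (complex) eigenvalue of the real matrix `W`. -/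
def IsEigenvalue {n : ℕ} (W : Matrix (Fin n) (Fin n) ℝ) (μ : ℂ) : Prop :=
  ∃ v : Fin n → ℂ, v ≠ 0 ∧ (W.map (Complex.ofReal)).mulVec v = μ • v

/-!
At a maximizer `R` of `F` on `SO(n)` the derivative `F (R S)` vanishes for every skew `S`.
Writing `F (R₀ X) = tr (B X)`, this makes `B` and `B e^W` symmetric, hence `e^W B e^W = B`.
Diagonalize `W = U diag(-i dₖ) U*` with `|dₖ| ≤ π` and put `C = U* B U`; then
`g s := F (R₀ e^{sW}) = ∑ₖ Cₖₖ e^{-i dₖ s}`, and `e^W B e^W = B` gives `e^{-2i dₖ} Cₖₖ = Cₖₖ`,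
so every frequency `dₖ` that occurs is `0` or `±π`. Therefore `g s + g (s + 1)` does not depend
on `s`; it equals `g 0 + g 1 = 2 max F`, and since both summands are at most `max F`, `g` is
constant.
-/

section Complexification

variable {m : Type*} [Fintype m]

theorem map_ofReal_mul (M N : Matrix m m ℝ) :
    (M * N).map Complex.ofReal = M.map Complex.ofReal * N.map Complex.ofReal :=
  Matrix.map_mul (f := Complex.ofRealHom)

theorem ofReal_trace (M : Matrix m m ℝ) : ((trace M : ℝ) : ℂ) = trace (M.map Complex.ofReal) :=
  AddMonoidHom.map_trace Complex.ofRealHom M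

end Complexification

section MatrixExp

attribute [local instance] Matrix.linftyOpNormedRing Matrix.linftyOpNormedAlgebra

open NormedSpace

variable {m : Type*} [Fintype m] [DecidableEq m]

theorem transpose_exp_mul_exp_of_skew {W : Matrix m m ℝ} (hW : Wᵀ = -W) :
    (exp W)ᵀ * exp W = 1 := by
  rw [← exp_transpose, hW, ← exp_add_of_commute _ _ (Commute.neg_left (Commute.refl W)),
    neg_add_cancel, exp_zero]

theorem det_exp_of_skew {W : Matrix m m ℝ} (hW : Wᵀ = -W) : (exp W).det = 1 := by
  have hcont : Continuous fun s : ℝ => (exp (s • W)).det :=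
    (exp_continuous.comp (continuous_id.smul continuous_const)).matrix_det
  have hsq : Set.EqOn ((fun s : ℝ => (exp (s • W)).det) ^ 2) 1 Set.univ := fun s _ => by
    have hsW : (s • W)ᵀ = -(s • W) := by rw [transpose_smul, hW, smul_neg]
    simpa [det_mul, det_transpose, sq] using congrArg det (transpose_exp_mul_exp_of_skew hsW)
  rcases isPreconnected_univ.eq_one_or_eq_neg_one_of_sq_eq hcont.continuousOn hsq with h | h
  · simpa using h (Set.mem_univ 1)
  · exact absurd (h (Set.mem_univ 0)) (by norm_num)

theorem map_exp_ofReal (M : Matrix m m ℝ) :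
    (exp M).map Complex.ofReal = exp (M.map Complex.ofReal) :=
  map_exp Complex.ofRealHom.mapMatrix (continuous_id.matrix_map Complex.continuous_ofReal) M

variable {n : ℕ}

theorem mul_mem_SO {R S : Matrix (Fin n) (Fin n) ℝ} (hR : R ∈ SO n) (hS : S ∈ SO n) :
    R * S ∈ SO n := by
  refine ⟨?_, by rw [det_mul, hR.2, hS.2, mul_one]⟩
  rw [transpose_mul, Matrix.mul_assoc, ← Matrix.mul_assoc Rᵀ, hR.1, Matrix.one_mul, hS.1]

theorem exp_smul_mem_SO_of_skew {W : Matrix (Fin n) (Fin n) ℝ} (hW : Wᵀ = -W) (s : ℝ) :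
    exp (s • W) ∈ SO n :=
  have hsW : (s • W)ᵀ = -(s • W) := by rw [transpose_smul, hW, smul_neg]
  ⟨transpose_exp_mul_exp_of_skew hsW, det_exp_of_skew hsW⟩

theorem map_mul_skew_eq_zero_of_isMaxOn {F : Matrix (Fin n) (Fin n) ℝ →ₗ[ℝ] ℝ}
    {R : Matrix (Fin n) (Fin n) ℝ} (hR : R ∈ SO n) (hmax : IsMaxOn F (SO n) R)
    {S : Matrix (Fin n) (Fin n) ℝ} (hS : Sᵀ = -S) : F (R * S) = 0 := by
  let L : Matrix (Fin n) (Fin n) ℝ →L[ℝ] ℝ :=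
    LinearMap.toContinuousLinearMap (F ∘ₗ LinearMap.mulLeft ℝ R)
  have hderiv : HasDerivAt (fun u : ℝ => L (exp (u • S))) (F (R * S)) 0 := by
    have := L.hasFDerivAt.comp_hasDerivAt 0 (hasDerivAt_exp_smul_const' S (0 : ℝ))
    rwa [zero_smul, exp_zero, Matrix.mul_one] at this
  refine IsLocalMax.hasDerivAt_eq_zero (Filter.Eventually.of_forall fun u => ?_) hderiv
  simpa [L] using isMaxOn_iff.mp hmax _ (mul_mem_SO hR (exp_smul_mem_SO_of_skew hS u))

end MatrixExp

section TraceDuality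

variable {m R : Type*} [Fintype m] [DecidableEq m] [CommRing R]

theorem exists_trace_mul_eq (L : Matrix m m R →ₗ[R] R) :
    ∃ B : Matrix m m R, ∀ X, L X = trace (B * X) := by
  refine ⟨of fun i j => L (single j i 1), fun X => ?_⟩
  conv_lhs => rw [matrix_eq_sum_single X]
  simp only [map_sum, trace, diag, mul_apply, of_apply]
  rw [Finset.sum_comm]
  refine Finset.sum_congr rfl fun i _ => Finset.sum_congr rfl fun j _ => ?_
  rw [mul_comm, ← smul_eq_mul, ← map_smul, smul_single, smul_eq_mul, mul_one]

theorem isSymm_of_trace_mul_skew {M : Matrix m m R}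
    (h : ∀ S : Matrix m m R, Sᵀ = -S → trace (M * S) = 0) : M.IsSymm := by
  ext i j
  have := h (single i j 1 - single j i 1) (by simp [transpose_sub])
  simpa [Matrix.mul_sub, trace_mul_single, sub_eq_zero] using this

theorem mul_mul_eq_self_of_isSymm {B O : Matrix m m R} (hO : Oᵀ * O = 1) (hB : B.IsSymm)
    (hBO : (B * O).IsSymm) : O * B * O = B := by
  have : B * O = Oᵀ * B := by rw [← hBO.eq, transpose_mul, hB.eq]
  rw [Matrix.mul_assoc, this, ← Matrix.mul_assoc, mul_eq_one_comm.mp hO, Matrix.one_mul]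

end TraceDuality

section Spectral

open Complex

variable {m : Type*} [Fintype m] [DecidableEq m]

theorem exists_unitary_diagonalization_of_skew {W : Matrix m m ℝ} (hW : Wᵀ = -W) :
    ∃ U ∈ unitaryGroup m ℂ, ∃ d : m → ℝ,
      W.map ofReal = U * diagonal (fun k => -I * d k) * star U := by
  have hH : (I • W.map ofReal).IsHermitian := by
    ext i j
    have hij : W j i = -W i j := congrFun (congrFun hW i) j
    simp [hij]
  refine ⟨hH.eigenvectorUnitary, hH.eigenvectorUnitary.2, hH.eigenvalues, ?_⟩
  have := congrArg (-I • ·) hH.spectral_theorem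
  simp only [smul_smul, neg_mul, I_mul_I, neg_neg, one_smul, Unitary.conjStarAlgAut_apply] at this
  refine this.trans ?_
  rw [← Matrix.smul_mul, ← Matrix.mul_smul, ← diagonal_smul]
  rfl

theorem exp_conj_diagonal {U : Matrix m m ℂ} (hU : U ∈ unitaryGroup m ℂ) (e : m → ℂ) :
    NormedSpace.exp (U * diagonal e * star U) = U * diagonal (fun k => cexp (e k)) * star U := by
  have hinv : U⁻¹ = star U := inv_eq_right_inv (mem_unitaryGroup_iff.mp hU)
  rw [← hinv, Matrix.exp_conj _ _ (Unitary.isUnit_coe (U := ⟨U, hU⟩)), exp_diagonal, Pi.exp_def,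
    exp_eq_exp_ℂ]

theorem map_exp_smul_of_eq_conj_diagonal {W : Matrix m m ℝ} {U : Matrix m m ℂ}
    (hU : U ∈ unitaryGroup m ℂ) {e : m → ℂ} (hW : W.map ofReal = U * diagonal e * star U)
    (s : ℝ) :
    (NormedSpace.exp (s • W)).map ofReal = U * diagonal (fun k => cexp (s * e k)) * star U := by
  rw [map_exp_ofReal, Matrix.map_smul' _ _ _ (fun _ _ => ofReal_mul _ _), hW, ← Matrix.smul_mul,
    ← Matrix.mul_smul, ← diagonal_smul]
  exact exp_conj_diagonal hU _

theorem trace_mul_conj_diagonal (B U : Matrix m m ℂ) (f : m → ℂ) :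
    trace (B * (U * diagonal f * star U)) = ∑ k, (star U * B * U) k k * f k := by
  rw [← Matrix.mul_assoc, trace_mul_comm, ← Matrix.mul_assoc, ← Matrix.mul_assoc]
  simp [trace, mul_diagonal]

theorem conj_diag_invariant_of_mul_mul_eq {U B : Matrix m m ℂ} (hU : U ∈ unitaryGroup m ℂ)
    {e : m → ℂ} (h : U * diagonal e * star U * B * (U * diagonal e * star U) = B) (k : m) :
    e k * (star U * B * U) k k * e k = (star U * B * U) k k := by
  have hU' : star U * U = 1 := mem_unitaryGroup_iff'.mp hU
  have : diagonal e * (star U * B * U) * diagonal e = star U * B * U := by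
    conv_rhs => rw [← h]
    simp only [Matrix.mul_assoc, hU', Matrix.mul_one]
    simp only [← Matrix.mul_assoc, hU', Matrix.one_mul]
  simpa [mul_diagonal, diagonal_mul] using congrFun (congrFun this k) k

end Spectral

section Geodesic

open Complex

variable {n : ℕ}

theorem isEigenvalue_of_eq_conj_diagonal {W : Matrix (Fin n) (Fin n) ℝ}
    {U : Matrix (Fin n) (Fin n) ℂ} (hU : U ∈ unitaryGroup (Fin n) ℂ) {e : Fin n → ℂ}
    (hW : W.map ofReal = U * diagonal e * star U) (k : Fin n) : IsEigenvalue W (e k) := by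
  refine ⟨U *ᵥ Pi.single k 1, fun h => ?_, ?_⟩
  · have := congrArg (star U *ᵥ ·) h
    rw [mulVec_mulVec, mem_unitaryGroup_iff'.mp hU, one_mulVec, mulVec_zero] at this
    simpa using congrFun this k
  · rw [hW, mulVec_mulVec, Matrix.mul_assoc, mem_unitaryGroup_iff'.mp hU, Matrix.mul_one,
      ← mulVec_mulVec, diagonal_mulVec_single, ← mulVec_smul]
    congr 1
    ext j
    simp [Pi.single_apply]

theorem mul_cexp_add_mul_cexp_shift {c : ℂ} {d : ℝ} (hd : |d| ≤ Real.pi)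
    (h : cexp (-I * d) * c * cexp (-I * d) = c) (s : ℝ) :
    c * cexp (s * (-I * d)) + c * cexp ((s + 1 : ℝ) * (-I * d)) = c * (1 + cexp (-I * d)) := by
  have hsq : c * (cexp (-I * d) - 1) * (cexp (-I * d) + 1) = 0 := by linear_combination h
  have hshift : cexp ((s + 1 : ℝ) * (-I * d)) = cexp (s * (-I * d)) * cexp (-I * d) := by
    rw [← Complex.exp_add]
    push_cast
    ring_nf
  rcases mul_eq_zero.mp hsq with h1 | h1
  · rcases mul_eq_zero.mp h1 with hc | h1
    · simp [hc]
    have hcos : Real.cos d = 1 := by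
      have := congrArg re (sub_eq_zero.mp h1)
      rwa [show -I * d = ((-d : ℝ) : ℂ) * I by push_cast; ring, exp_ofReal_mul_I_re,
        Real.cos_neg, one_re] at this
    rw [abs_le] at hd
    obtain rfl : d = 0 := (Real.cos_eq_one_iff_of_lt_of_lt (by linarith [Real.pi_pos])
      (by linarith [Real.pi_pos])).mp hcos
    simp only [ofReal_zero, mul_zero, Complex.exp_zero]
    ring
  · rw [hshift, eq_neg_of_add_eq_zero_left h1]
    ring

theorem trace_mul_exp_add_trace_mul_exp_shift {B W : Matrix (Fin n) (Fin n) ℝ} (hW : Wᵀ = -W)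
    (hspec : ∀ μ, IsEigenvalue W μ → ‖μ‖ ≤ Real.pi)
    (hB : NormedSpace.exp W * B * NormedSpace.exp W = B) (s : ℝ) :
    trace (B * NormedSpace.exp (s • W)) + trace (B * NormedSpace.exp ((s + 1) • W)) =
      trace B + trace (B * NormedSpace.exp W) := by
  obtain ⟨U, hU, d, hWd⟩ := exists_unitary_diagonalization_of_skew hW
  have hd : ∀ k, |d k| ≤ Real.pi := fun k => by
    simpa using hspec _ (isEigenvalue_of_eq_conj_diagonal hU hWd k)
  set C := star U * B.map ofReal * U
  have htrace : ∀ s : ℝ, ((trace (B * NormedSpace.exp (s • W)) : ℝ) : ℂ) =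
      ∑ k, C k k * cexp (s * (-I * d k)) := fun s => by
    rw [ofReal_trace, map_ofReal_mul, map_exp_smul_of_eq_conj_diagonal hU hWd,
      trace_mul_conj_diagonal]
  have hC : ∀ k, cexp (-I * d k) * C k k * cexp (-I * d k) = C k k := by
    have := congrArg (fun M => M.map ofReal) hB
    simp only [map_ofReal_mul] at this
    rw [← one_smul ℝ W, map_exp_smul_of_eq_conj_diagonal hU hWd] at this
    simpa using conj_diag_invariant_of_mul_mul_eq hU this
  suffices ∀ s : ℝ, ((trace (B * NormedSpace.exp (s • W)) +
      trace (B * NormedSpace.exp ((s + 1) • W)) : ℝ) : ℂ) =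
      ((trace (B * NormedSpace.exp ((0 : ℝ) • W)) +
      trace (B * NormedSpace.exp ((0 + 1 : ℝ) • W)) : ℝ) : ℂ) by
    simpa using ofReal_injective (this s)
  intro s
  push_cast
  simp only [htrace, ← Finset.sum_add_distrib]
  refine Finset.sum_congr rfl fun k _ => ?_
  rw [mul_cexp_add_mul_cexp_shift (hd k) (hC k), mul_cexp_add_mul_cexp_shift (hd k) (hC k)]

end Geodesic


theorem geodesic_between_maximizers_general (n : ℕ)
    (F : Matrix (Fin n) (Fin n) ℝ →ₗ[ℝ] ℝ)
    (R₀ R₁ : Matrix (Fin n) (Fin n) ℝ) (hR₀ : R₀ ∈ SO n) (hR₁ : R₁ ∈ SO n)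
    (hmax₀ : ∀ R ∈ SO n, F R ≤ F R₀) (hmax₁ : ∀ R ∈ SO n, F R ≤ F R₁)
    (W : Matrix (Fin n) (Fin n) ℝ) (hW : Wᵀ = -W)
    (hlog : R₁ = R₀ * NormedSpace.exp W)
    (heig : ∀ μ : ℂ, IsEigenvalue W μ → μ ≠ 0 →
      ∃ lam : ℝ, lam ∈ Set.Ioc (-Real.pi) Real.pi ∧
        (μ = Complex.I * lam ∨ μ = -(Complex.I * lam))) :
    ∀ t : ℝ, ∀ R ∈ SO n, F R ≤ F (R₀ * NormedSpace.exp (t • W)) := by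
  intro t R hR
  obtain ⟨B, hB⟩ : ∃ B, ∀ X, F (R₀ * X) = trace (B * X) :=
    exists_trace_mul_eq (F ∘ₗ LinearMap.mulLeft ℝ R₀)
  have hBsymm : B.IsSymm := isSymm_of_trace_mul_skew fun S hS => by
    rw [← hB]
    exact map_mul_skew_eq_zero_of_isMaxOn hR₀ hmax₀ hS
  have hBOsymm : (B * NormedSpace.exp W).IsSymm := isSymm_of_trace_mul_skew fun S hS => by
    rw [Matrix.mul_assoc, ← hB, ← Matrix.mul_assoc, ← hlog]
    exact map_mul_skew_eq_zero_of_isMaxOn hR₁ hmax₁ hS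
  have hspec : ∀ μ, IsEigenvalue W μ → ‖μ‖ ≤ Real.pi := fun μ hμ => by
    rcases eq_or_ne μ 0 with rfl | hμ0
    · simpa using Real.pi_pos.le
    obtain ⟨lam, ⟨hlo, hhi⟩, rfl | rfl⟩ := heig μ hμ hμ0 <;>
      simpa [abs_le] using ⟨hlo.le, hhi⟩
  have hshift := trace_mul_exp_add_trace_mul_exp_shift hW hspec
    (mul_mul_eq_self_of_isSymm (transpose_exp_mul_exp_of_skew hW) hBsymm hBOsymm) t
  have htrB : trace B = F R₀ := by simpa using (hB 1).symm
  rw [← hB, ← hB, ← hB, ← hlog, htrB, le_antisymm (hmax₀ R₁ hR₁) (hmax₁ R₀ hR₀)] at hshift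
  have := hmax₀ _ (mul_mem_SO hR₀ (exp_smul_mem_SO_of_skew hW (t + 1)))
  linarith [hmax₀ R hR]

/-- If `R₀ ≠ R₁` both maximize `F` over `SO(n)`, and `R₁ = R₀ e^W` with `W` skew-symmetric
whose nonzero eigenvalues `±iλ` satisfy `λ ∈ (-π, π]`, then the whole geodesic
`t ↦ R₀ e^{tW}` consists of maximizers of `F` over `SO(n)`. -/
theorem geodesic_between_maximizers (n : ℕ)
    (F : Matrix (Fin n) (Fin n) ℝ →ₗ[ℝ] ℝ)
    (R₀ R₁ : Matrix (Fin n) (Fin n) ℝ) (hR₀ : R₀ ∈ SO n) (hR₁ : R₁ ∈ SO n)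
    (hne : R₀ ≠ R₁)
    (hmax₀ : ∀ R ∈ SO n, F R ≤ F R₀) (hmax₁ : ∀ R ∈ SO n, F R ≤ F R₁)
    (W : Matrix (Fin n) (Fin n) ℝ) (hW : Wᵀ = -W)
    (hlog : R₁ = R₀ * NormedSpace.exp W)
    (heig : ∀ μ : ℂ, IsEigenvalue W μ → μ ≠ 0 →
      ∃ lam : ℝ, lam ∈ Set.Ioc (-Real.pi) Real.pi ∧
        (μ = Complex.I * lam ∨ μ = -(Complex.I * lam))) :
    ∀ t : ℝ, ∀ R ∈ SO n, F R ≤ F (R₀ * NormedSpace.exp (t • W)) :=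
  geodesic_between_maximizers_general n F R₀ R₁ hR₀ hR₁ hmax₀ hmax₁ W hW hlog heig
end
end

section
/- Let F be a linear functional on n×n real matrices with I ∈ argmax_{SO(n)} F. Then the set T := {W skew-symmetric : F(W²) = 0} is a linear subspace of the skew-symmetric matrices. -/
/-!
Along the one-parameter subgroup `t ↦ exp (t • W)` of `SO n` generated by a skew-symmetric `W`,
the function `t ↦ F (exp (t • W))` is maximal at `t = 0`, so its second derivative `F (W * W)`
there is `≤ 0`. Thus `W ↦ F (W * W)` is a quadratic form that is nonpositive on the skew-symmetric
matrices; a nonpositive quadratic form vanishing at `W₁` and `W₂` vanishes on their whole span,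
since its polar form `F (W₁ * W₂ + W₂ * W₁)` is squeezed to `0` by evaluating at `W₁ ± W₂`.
-/

open Matrix
noncomputable section

open NormedSpace Filter Topology

theorem IsLocalMax.deriv_deriv_nonpos {f : ℝ → ℝ} {x₀ : ℝ} (h : IsLocalMax f x₀)
    (hc : ContinuousAt f x₀) : deriv (deriv f) x₀ ≤ 0 := by
  by_contra! hpos
  have hmin := isLocalMin_of_deriv_deriv_pos hpos h.deriv_eq_zero hc
  have hconst : f =ᶠ[𝓝 x₀] fun _ => f x₀ := by
    filter_upwards [h, hmin] with x hx hx' using le_antisymm hx hx'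
  have hderiv : deriv f =ᶠ[𝓝 x₀] fun _ => 0 := by
    filter_upwards [hconst.eventuallyEq_nhds] with x hx
    rw [hx.deriv_eq, deriv_const]
  rw [hderiv.deriv_eq, deriv_const] at hpos
  exact lt_irrefl _ hpos

theorem map_mul_self_smul_add_smul {A : Type*} [Ring A] [Algebra ℝ A] (F : A →ₗ[ℝ] ℝ)
    (x y : A) (a b : ℝ) :
    F ((a • x + b • y) * (a • x + b • y)) =
      a ^ 2 * F (x * x) + a * b * F (x * y + y * x) + b ^ 2 * F (y * y) := by
  simp only [add_mul, mul_add, smul_mul_assoc, mul_smul_comm, map_add, map_smul, smul_eq_mul]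
  ring

theorem map_mul_self_smul_add_smul_eq_zero {A : Type*} [Ring A] [Algebra ℝ A]
    (F : A →ₗ[ℝ] ℝ) {x y : A} (hx : F (x * x) = 0) (hy : F (y * y) = 0)
    (hnonpos : ∀ s t : ℝ, F ((s • x + t • y) * (s • x + t • y)) ≤ 0) (a b : ℝ) :
    F ((a • x + b • y) * (a • x + b • y)) = 0 := by
  have hplus := hnonpos 1 1
  have hminus := hnonpos 1 (-1)
  simp only [map_mul_self_smul_add_smul, hx, hy] at hplus hminus ⊢
  have hpolar : F (x * y + y * x) = 0 := by linarith
  simp [hpolar]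

namespace Matrix

variable {m : Type*} [Fintype m] [DecidableEq m]

theorem det_exp_pos (A : Matrix m m ℝ) : 0 < (exp A).det := by
  have hhalf : exp A = exp ((2⁻¹ : ℝ) • A) * exp ((2⁻¹ : ℝ) • A) := by
    rw [← exp_add_of_commute _ _ (Commute.refl _), ← add_smul]
    norm_num
  have hne : (exp ((2⁻¹ : ℝ) • A)).det ≠ 0 :=
    ((isUnit_iff_isUnit_det (exp ((2⁻¹ : ℝ) • A))).mp (isUnit_exp _)).ne_zero
  rw [hhalf, det_mul]
  exact mul_self_pos.mpr hne

theorem transpose_exp_mul_exp_of_transpose_eq_neg {A : Matrix m m ℝ} (hA : Aᵀ = -A) :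
    (exp A)ᵀ * exp A = 1 := by
  rw [← exp_transpose, hA, ← exp_add_of_commute _ _ (Commute.refl A).neg_left,
    neg_add_cancel, exp_zero]

theorem det_exp_of_transpose_eq_neg {A : Matrix m m ℝ} (hA : Aᵀ = -A) : (exp A).det = 1 := by
  have hsq : (exp A).det ^ 2 = 1 := by
    simpa [det_mul, det_transpose, sq] using
      congrArg det (transpose_exp_mul_exp_of_transpose_eq_neg hA)
  exact (pow_eq_one_iff_of_nonneg (det_exp_pos A).le two_ne_zero).mp hsq

section LinftyOpNorm

attribute [local instance] Matrix.linftyOpNormedRing Matrix.linftyOpNormedAlgebra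

theorem hasDerivAt_map_exp_smul (F : Matrix m m ℝ →ₗ[ℝ] ℝ) (W : Matrix m m ℝ) (t : ℝ) :
    HasDerivAt (fun t : ℝ => F (exp (t • W))) (F (exp (t • W) * W)) t :=
  F.toContinuousLinearMap.hasFDerivAt.comp_hasDerivAt t (hasDerivAt_exp_smul_const W t)

theorem deriv_deriv_map_exp_smul_zero (F : Matrix m m ℝ →ₗ[ℝ] ℝ) (W : Matrix m m ℝ) :
    deriv (deriv fun t : ℝ => F (exp (t • W))) 0 = F (W * W) := by
  have h := F.toContinuousLinearMap.hasFDerivAt.comp_hasDerivAt (0 : ℝ)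
    ((hasDerivAt_exp_smul_const W (0 : ℝ)).mul_const W)
  rw [zero_smul, exp_zero, one_mul] at h
  rw [funext fun t => (hasDerivAt_map_exp_smul F W t).deriv]
  exact h.deriv

end LinftyOpNorm

end Matrix

theorem exp_mem_SO {n : ℕ} {W : Matrix (Fin n) (Fin n) ℝ} (hW : Wᵀ = -W) : exp W ∈ SO n :=
  ⟨transpose_exp_mul_exp_of_transpose_eq_neg hW, det_exp_of_transpose_eq_neg hW⟩

theorem map_mul_self_nonpos_of_forall_le_map_one {n : ℕ} (F : Matrix (Fin n) (Fin n) ℝ →ₗ[ℝ] ℝ)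
    (hmax : ∀ R ∈ SO n, F R ≤ F 1) {W : Matrix (Fin n) (Fin n) ℝ} (hW : Wᵀ = -W) :
    F (W * W) ≤ 0 := by
  have hlocal : IsLocalMax (fun t : ℝ => F (exp (t • W))) 0 :=
    Eventually.of_forall fun t => by
      simpa using hmax _ (exp_mem_SO (by rw [transpose_smul, hW, smul_neg]))
  rw [← deriv_deriv_map_exp_smul_zero]
  exact hlocal.deriv_deriv_nonpos (hasDerivAt_map_exp_smul F W 0).continuousAt

theorem tangent_set_is_subspace_general (n : ℕ)
    (F : Matrix (Fin n) (Fin n) ℝ →ₗ[ℝ] ℝ)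
    (hmax : ∀ R ∈ SO n, F R ≤ F 1) :
    F ((0 : Matrix (Fin n) (Fin n) ℝ) * 0) = 0 ∧
    ∀ (a b : ℝ) (W₁ W₂ : Matrix (Fin n) (Fin n) ℝ),
      W₁ᵀ = -W₁ → W₂ᵀ = -W₂ → F (W₁ * W₁) = 0 → F (W₂ * W₂) = 0 →
        F ((a • W₁ + b • W₂) * (a • W₁ + b • W₂)) = 0 := by
  refine ⟨by simp, fun a b W₁ W₂ h₁ h₂ hF₁ hF₂ => ?_⟩
  refine map_mul_self_smul_add_smul_eq_zero F hF₁ hF₂ (fun s t => ?_) a b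
  refine map_mul_self_nonpos_of_forall_le_map_one F hmax ?_
  rw [transpose_add, transpose_smul, transpose_smul, h₁, h₂, smul_neg, smul_neg, neg_add]

/-- If `I` maximizes `F` over `SO(n)`, then `T = {W skew : F(W²) = 0}` is a linear subspace
of the skew-symmetric matrices: it is closed under linear combinations (and contains `0`). -/
theorem tangent_set_is_subspace (n : ℕ)
    (F : Matrix (Fin n) (Fin n) ℝ →ₗ[ℝ] ℝ)
    (hI : (1 : Matrix (Fin n) (Fin n) ℝ) ∈ SO n)
    (hmax : ∀ R ∈ SO n, F R ≤ F 1) :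
    F ((0 : Matrix (Fin n) (Fin n) ℝ) * 0) = 0 ∧
    ∀ (a b : ℝ) (W₁ W₂ : Matrix (Fin n) (Fin n) ℝ),
      W₁ᵀ = -W₁ → W₂ᵀ = -W₂ → F (W₁ * W₁) = 0 → F (W₂ * W₂) = 0 →
        F ((a • W₁ + b • W₂) * (a • W₁ + b • W₂)) = 0 :=
  tangent_set_is_subspace_general n F hmax
end
end
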